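/- If any one of the steps TC1, TC2 or TC3 is applied to a pair (Γᵢ, κᵢ), where Γᵢ is a word graph in which every node is reachable from 0 (i.e. for every node β there is a (0, β)-path), then every node of the resulting word graph Γᵢ₊₁ is reachable from 0. -/
import Mathlib


namespace TC

/-- A word graph over the alphabet `A`: a set of nodes (natural numbers) and
labelled edges. -/
structure WordGraph (A : Type*) where
  nodes : Set ℕ
  edges : Set (ℕ × A × ℕ)

namespace WordGraph

variable {A : Type*}

/-- The conditions for `Γ` to really be a word graph: finitely many nodes,
`0` is a node, and the source and target of every edge are nodes. -/
def Valid (Γ : WordGraph A) : Prop :=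
  Γ.nodes.Finite ∧ 0 ∈ Γ.nodes ∧
    ∀ e ∈ Γ.edges, e.1 ∈ Γ.nodes ∧ e.2.2 ∈ Γ.nodes

/-- `IsPath Γ α w β` means that the word `w` labels an `(α, β)`-path in `Γ`. -/
inductive IsPath (Γ : WordGraph A) : ℕ → List A → ℕ → Prop
  | nil {α : ℕ} : α ∈ Γ.nodes → IsPath Γ α [] α
  | cons {α β γ : ℕ} {a : A} {w : List A} :
      (α, a, β) ∈ Γ.edges → IsPath Γ β w γ → IsPath Γ α (a :: w) γ

/-- A path recorded together with the list of successive targets of its edges. -/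
inductive PathVia (Γ : WordGraph A) : ℕ → List A → List ℕ → Prop
  | nil {α : ℕ} : α ∈ Γ.nodes → PathVia Γ α [] []
  | cons {α β : ℕ} {a : A} {w : List A} {γs : List ℕ} :
      (α, a, β) ∈ Γ.edges → PathVia Γ β w γs → PathVia Γ α (a :: w) (β :: γs)

/-- The path relation `(α)π_Γ`. -/
def pathRel (Γ : WordGraph A) (α : ℕ) : Set (List A × List A) :=
  {p | ∃ β : ℕ, Γ.IsPath α p.1 β ∧ Γ.IsPath α p.2 β}

def Deterministic (Γ : WordGraph A) : Prop :=
  ∀ ⦃α : ℕ⦄ ⦃a : A⦄ ⦃β γ : ℕ⦄, (α, a, β) ∈ Γ.edges → (α, a, γ) ∈ Γ.edges → β = γ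

def Complete (Γ : WordGraph A) : Prop :=
  ∀ α ∈ Γ.nodes, ∀ a : A, ∃ β : ℕ, (α, a, β) ∈ Γ.edges

def Compatible (Γ : WordGraph A) (W : Set (List A × List A)) : Prop :=
  ∀ α ∈ Γ.nodes, W ⊆ Γ.pathRel α

end WordGraph

/-- `min (α/κ)`: the minimum element of the `κ`-class of `α` inside `N`. -/
noncomputable def classMin (N : Set ℕ) (κ : ℕ → ℕ → Prop) (α : ℕ) : ℕ :=
  sInf {β : ℕ | β ∈ N ∧ κ α β}

/-- The quotient of a word graph by an equivalence relation on its nodes. -/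
def WordGraph.quot {A : Type*} (Γ : WordGraph A) (κ : ℕ → ℕ → Prop) : WordGraph A where
  nodes := classMin Γ.nodes κ '' Γ.nodes
  edges := {e : ℕ × A × ℕ | ∃ p ∈ Γ.edges,
      e = (classMin Γ.nodes κ p.1, p.2.1, classMin Γ.nodes κ p.2.2)}

/-- `κ` is an equivalence relation on the set `N` (represented as a relation on `ℕ`
whose related elements lie in `N`). -/
def IsEquivOn (N : Set ℕ) (κ : ℕ → ℕ → Prop) : Prop :=
  (∀ ⦃x y : ℕ⦄, κ x y → x ∈ N ∧ y ∈ N) ∧ (∀ x ∈ N, κ x x) ∧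
    (∀ ⦃x y : ℕ⦄, κ x y → κ y x) ∧ (∀ ⦃x y z : ℕ⦄, κ x y → κ y z → κ x z)

/-- `κ` is the trivial equivalence (the diagonal) on `N`. -/
def TrivialOn (N : Set ℕ) (κ : ℕ → ℕ → Prop) : Prop :=
  ∀ x y : ℕ, κ x y ↔ (x = y ∧ x ∈ N)

/-- `κ` is the least equivalence relation on `N` containing `base`. -/
def LeastEquivOn (N : Set ℕ) (base κ : ℕ → ℕ → Prop) : Prop :=
  IsEquivOn N κ ∧ (∀ ⦃x y : ℕ⦄, base x y → κ x y) ∧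
    ∀ σ : ℕ → ℕ → Prop, IsEquivOn N σ → (∀ ⦃x y : ℕ⦄, base x y → σ x y) →
      ∀ ⦃x y : ℕ⦄, κ x y → σ x y

section congruences

variable {A : Type*}

def IsCongruence (σ : List A → List A → Prop) : Prop :=
  Equivalence σ ∧ (∀ u v w : List A, σ u v → σ (u ++ w) (v ++ w)) ∧
    (∀ u v w : List A, σ u v → σ (w ++ u) (w ++ v))

def IsRightCongruence (σ : List A → List A → Prop) : Prop :=
  Equivalence σ ∧ ∀ u v w : List A, σ u v → σ (u ++ w) (v ++ w)

def IsLeftCongruence (σ : List A → List A → Prop) : Prop :=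
  Equivalence σ ∧ ∀ u v w : List A, σ u v → σ (w ++ u) (w ++ v)

def IsLeastCongruenceContaining (X : Set (List A × List A))
    (σ : List A → List A → Prop) : Prop :=
  IsCongruence σ ∧ (∀ p ∈ X, σ p.1 p.2) ∧
    ∀ τ : List A → List A → Prop, IsCongruence τ → (∀ p ∈ X, τ p.1 p.2) →
      ∀ u v : List A, σ u v → τ u v

def IsLeastRightCongruenceContaining (X : Set (List A × List A))
    (σ : List A → List A → Prop) : Prop :=
  IsRightCongruence σ ∧ (∀ p ∈ X, σ p.1 p.2) ∧
    ∀ τ : List A → List A → Prop, IsRightCongruence τ → (∀ p ∈ X, τ p.1 p.2) →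
      ∀ u v : List A, σ u v → τ u v

def IsLeastLeftCongruenceContaining (X : Set (List A × List A))
    (σ : List A → List A → Prop) : Prop :=
  IsLeftCongruence σ ∧ (∀ p ∈ X, σ p.1 p.2) ∧
    ∀ τ : List A → List A → Prop, IsLeftCongruence τ → (∀ p ∈ X, τ p.1 p.2) →
      ∀ u v : List A, σ u v → τ u v

end congruences

section steps

variable {A : Type*}

/-- Step TC1 with the new node `fresh`: define a new node together with a new
edge `(α, a, fresh)` where `α` had no edge labelled by `a`. -/
def TC1 (fresh : ℕ) (Γ : WordGraph A) (κ : ℕ → ℕ → Prop)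
    (Γ' : WordGraph A) (κ' : ℕ → ℕ → Prop) : Prop :=
  ∃ (α : ℕ) (a : A), α ∈ Γ.nodes ∧ (∀ β : ℕ, (α, a, β) ∉ Γ.edges) ∧
    Γ'.nodes = insert fresh Γ.nodes ∧
    Γ'.edges = insert (α, a, fresh) Γ.edges ∧
    ∀ x y : ℕ, κ' x y ↔ (κ x y ∨ (x = fresh ∧ y = fresh))

/-- Step TC1 applied at the specific node `α₀`. -/
def TC1At (α₀ fresh : ℕ) (Γ : WordGraph A) (κ : ℕ → ℕ → Prop)
    (Γ' : WordGraph A) (κ' : ℕ → ℕ → Prop) : Prop :=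
  ∃ a : A, α₀ ∈ Γ.nodes ∧ (∀ β : ℕ, (α₀, a, β) ∉ Γ.edges) ∧
    Γ'.nodes = insert fresh Γ.nodes ∧
    Γ'.edges = insert (α₀, a, fresh) Γ.edges ∧
    ∀ x y : ℕ, κ' x y ↔ (κ x y ∨ (x = fresh ∧ y = fresh))

/-- Step TC2, applied with a relation `(u, v) ∈ W` at a node belonging to `allowed`;
the three mutually exclusive cases (a), (b), (c) appear as the three disjuncts. -/
def TC2 (W : Set (List A × List A)) (allowed : Set ℕ)
    (Γ : WordGraph A) (κ : ℕ → ℕ → Prop)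
    (Γ' : WordGraph A) (κ' : ℕ → ℕ → Prop) : Prop :=
  ∃ (α : ℕ) (u v : List A), α ∈ allowed ∧ α ∈ Γ.nodes ∧ (u, v) ∈ W ∧
    u ≠ [] ∧ v ≠ [] ∧
    ((∃ (v₁ : List A) (b : A) (β γ : ℕ), v = v₁ ++ [b] ∧
        Γ.IsPath α u β ∧ Γ.IsPath α v₁ γ ∧ (∀ δ : ℕ, (γ, b, δ) ∉ Γ.edges) ∧
        Γ'.nodes = Γ.nodes ∧ Γ'.edges = insert (γ, b, β) Γ.edges ∧
        (∀ x y : ℕ, κ' x y ↔ κ x y)) ∨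
      (∃ (u₁ : List A) (a : A) (β γ : ℕ), u = u₁ ++ [a] ∧
        Γ.IsPath α u₁ β ∧ Γ.IsPath α v γ ∧ (∀ δ : ℕ, (β, a, δ) ∉ Γ.edges) ∧
        Γ'.nodes = Γ.nodes ∧ Γ'.edges = insert (β, a, γ) Γ.edges ∧
        (∀ x y : ℕ, κ' x y ↔ κ x y)) ∨
      (∃ β γ : ℕ, Γ.IsPath α u β ∧ Γ.IsPath α v γ ∧ β ≠ γ ∧
        Γ' = Γ ∧
        LeastEquivOn Γ.nodes (fun x y => κ x y ∨ (x = β ∧ y = γ)) κ'))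

/-- Step TC3: replace `Γ` by its quotient by `κ`, and replace `κ` by the least
equivalence generated by the remaining non-deterministic pairs of edges. -/
def TC3 (Γ : WordGraph A) (κ : ℕ → ℕ → Prop)
    (Γ' : WordGraph A) (κ' : ℕ → ℕ → Prop) : Prop :=
  Γ' = Γ.quot κ ∧
    LeastEquivOn Γ'.nodes
      (fun β γ => β ≠ γ ∧ ∃ (α : ℕ) (a : A), (α, a, β) ∈ Γ'.edges ∧ (α, a, γ) ∈ Γ'.edges)
      κ'

end steps

/-- A run of the Todd–Coxeter process: a sequence of word graphs together with
equivalence relations on their node sets. -/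
structure Run (A : Type*) where
  graph : ℕ → WordGraph A
  kappa : ℕ → ℕ → ℕ → Prop

namespace Run

variable {A : Type*}

/-- All nodes used up to and including step `i`. -/
def used (run : Run A) (i : ℕ) : Set ℕ :=
  ⋃ j ∈ Set.Iic i, (run.graph j).nodes

/-- The new node introduced by TC1 at step `i`: one plus the maximum of all
nodes used so far. -/
noncomputable def fresh (run : Run A) (i : ℕ) : ℕ :=
  sSup (run.used i) + 1

/-- Step `i` of a run is an application of TC1, of TC2 (with a relation of `R`
at any node, or with a relation of `S` at the node `0`), or of TC3. -/
def Step (R S : Set (List A × List A)) (run : Run A) (i : ℕ) : Prop :=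
  TC1 (run.fresh i) (run.graph i) (run.kappa i) (run.graph (i+1)) (run.kappa (i+1)) ∨
  TC2 R Set.univ (run.graph i) (run.kappa i) (run.graph (i+1)) (run.kappa (i+1)) ∨
  TC2 S {0} (run.graph i) (run.kappa i) (run.graph (i+1)) (run.kappa (i+1)) ∨
  TC3 (run.graph i) (run.kappa i) (run.graph (i+1)) (run.kappa (i+1))

end Run

/-- A congruence enumeration for the least right congruence `ρ` containing
`R^# ∪ S`, with input `(run.graph 0, run.kappa 0)`. -/
structure IsEnumeration {A : Type*} (R S : Set (List A × List A))
    (ρ : List A → List A → Prop) (run : Run A) : Prop where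
  valid : (run.graph 0).Valid
  init_pathRel : ∀ p ∈ (run.graph 0).pathRel 0, ρ p.1 p.2
  init_kappa : TrivialOn (run.graph 0).nodes (run.kappa 0)
  steps : ∀ i : ℕ, run.Step R S i
  init_S : ∃ m : ℕ, ∀ p ∈ S, ∃ β γ : ℕ, (run.graph m).IsPath 0 p.1 β ∧
      (run.graph m).IsPath 0 p.2 γ ∧ (β = γ ∨ run.kappa m β γ)
  fair_c : ∀ i : ℕ, ∀ α ∈ (run.graph i).nodes, ∀ a : A,
      (∀ β : ℕ, (α, a, β) ∉ (run.graph i).edges) →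
      ∃ j : ℕ, i ≤ j ∧ (α ∉ (run.graph j).nodes ∨ ∃ β : ℕ, (α, a, β) ∈ (run.graph j).edges)
  fair_d : ∀ i : ℕ, ∀ α ∈ (run.graph i).nodes, ∀ p ∈ R,
      ∃ j : ℕ, i ≤ j ∧ (α ∉ (run.graph j).nodes ∨ p ∈ (run.graph j).pathRel α)
  fair_e : ∀ i : ℕ, ¬ TrivialOn (run.graph i).nodes (run.kappa i) →
      ∃ j : ℕ, i ≤ j ∧ TrivialOn (run.graph j).nodes (run.kappa j)

/-- The enumeration has terminated at step `i`: applying any of TC1, TC2, TC3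
to `(Γᵢ, κᵢ)` results in no change. -/
def TerminatedAt {A : Type*} (R S : Set (List A × List A)) (run : Run A) (i : ℕ) : Prop :=
  ∀ (Γ' : WordGraph A) (κ' : ℕ → ℕ → Prop),
    (TC1 (run.fresh i) (run.graph i) (run.kappa i) Γ' κ' ∨
      TC2 R Set.univ (run.graph i) (run.kappa i) Γ' κ' ∨
      TC2 S {0} (run.graph i) (run.kappa i) Γ' κ' ∨
      TC3 (run.graph i) (run.kappa i) Γ' κ') →
    Γ' = run.graph i ∧ ∀ x y : ℕ, κ' x y ↔ run.kappa i x y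

theorem isPath_mono {A : Type*} {Γ Γ' : WordGraph A} (hn : Γ.nodes ⊆ Γ'.nodes)
    (he : Γ.edges ⊆ Γ'.edges) {α β : ℕ} {w : List A} (h : Γ.IsPath α w β) :
    Γ'.IsPath α w β := by
  induction h with
  | nil h => exact .nil (hn h)
  | cons he' _ ih => exact .cons (he he') ih

theorem isPath_snoc {A : Type*} {Γ : WordGraph A} {α β γ : ℕ} {w : List A} {a : A}
    (h : Γ.IsPath α w β) (he : (β, a, γ) ∈ Γ.edges) (hγ : γ ∈ Γ.nodes) :
    Γ.IsPath α (w ++ [a]) γ := by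
  induction h with
  | nil _ => exact .cons he (.nil hγ)
  | cons he' _ ih => exact .cons he' (ih he)

theorem isPath_quot {A : Type*} {Γ : WordGraph A} {κ : ℕ → ℕ → Prop} {α β : ℕ}
    {w : List A} (h : Γ.IsPath α w β) :
    (Γ.quot κ).IsPath (classMin Γ.nodes κ α) w (classMin Γ.nodes κ β) := by
  induction h with
  | nil h => exact .nil ⟨_, h, rfl⟩
  | cons he _ ih => exact .cons ⟨_, he, rfl⟩ ih

/-- Applying any of TC1, TC2 or TC3 to a pair `(Γ, κ)` in which every
node of `Γ` is reachable from `0` yields a word graph in which every node is reachable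
from `0`. -/
theorem statement_8 {A : Type*} [Fintype A] (R : Set (List A × List A))
    (hRfin : R.Finite)
    (Γ Γ' : WordGraph A) (κ κ' : ℕ → ℕ → Prop)
    (hΓ : Γ.Valid) (hκ : IsEquivOn Γ.nodes κ)
    (used : Set ℕ) (husedfin : used.Finite) (hsub : Γ.nodes ⊆ used)
    (hreach : ∀ β ∈ Γ.nodes, ∃ w : List A, Γ.IsPath 0 w β)
    (hstep : TC1 (sSup used + 1) Γ κ Γ' κ' ∨ TC2 R Set.univ Γ κ Γ' κ' ∨ TC3 Γ κ Γ' κ') :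
    ∀ β ∈ Γ'.nodes, ∃ w : List A, Γ'.IsPath 0 w β := by
  obtain ⟨hfin, h0, hedges⟩ := hΓ
  rcases hstep with h1 | h2 | h3
  · obtain ⟨α, a, hα, -, hn, he, -⟩ := h1
    have hnsub : Γ.nodes ⊆ Γ'.nodes := by rw [hn]; exact Set.subset_insert _ _
    have hesub : Γ.edges ⊆ Γ'.edges := by rw [he]; exact Set.subset_insert _ _
    intro β hβ
    rw [hn] at hβ
    rcases hβ with rfl | hβ
    · obtain ⟨w, hw⟩ := hreach α hα
      exact ⟨w ++ [a], isPath_snoc (isPath_mono hnsub hesub hw)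
        (by rw [he]; exact Set.mem_insert _ _) (by rw [hn]; exact Set.mem_insert _ _)⟩
    · obtain ⟨w, hw⟩ := hreach β hβ
      exact ⟨w, isPath_mono hnsub hesub hw⟩
  · obtain ⟨α, u, v, -, -, -, -, -, hc⟩ := h2
    rcases hc with ⟨v₁, b, β, γ, -, -, -, -, hn, he, -⟩ |
      ⟨u₁, a, β, γ, -, -, -, -, hn, he, -⟩ | ⟨β, γ, -, -, -, hΓ', -⟩
    · intro δ hδ
      rw [hn] at hδ
      obtain ⟨w, hw⟩ := hreach δ hδ
      exact ⟨w, isPath_mono (by rw [hn]) (by rw [he]; exact Set.subset_insert _ _) hw⟩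
    · intro δ hδ
      rw [hn] at hδ
      obtain ⟨w, hw⟩ := hreach δ hδ
      exact ⟨w, isPath_mono (by rw [hn]) (by rw [he]; exact Set.subset_insert _ _) hw⟩
    · subst hΓ'; exact hreach
  · obtain ⟨hΓ', -⟩ := h3
    subst hΓ'
    rintro β' ⟨β, hβ, rfl⟩
    obtain ⟨w, hw⟩ := hreach β hβ
    have h00 : classMin Γ.nodes κ 0 = 0 :=
      Nat.sInf_eq_zero.mpr (Or.inl ⟨h0, hκ.2.1 0 h0⟩)
    exact ⟨w, h00 ▸ isPath_quot hw⟩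

end TC
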